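/- arXiv:2302.14372 — 6 statements merged into one kernel-verified Lean document; each statement's English description precedes it below -/
import Mathlib

section
/- The in-sample softmax optimality operator T*_β is a γ-contraction in the sup norm: for any two functions q₁, q₂ : S × A → ℝ, ‖T*_β q₁ − T*_β q₂‖∞ ≤ γ ‖q₁ − q₂‖∞. -/
open Finset

/-- The in-sample softmax optimality operator
`(T*_β q)(s,a) = r(s,a) + γ ∑_{s'} P(s,a)(s') · τ log ∑_{a' ∈ supp β(·|s')} exp(q(s',a')/τ)`. -/
noncomputable def Tstar {S A : Type*} [Fintype S] [Fintype A]
    (r : S → A → ℝ) (γ τ : ℝ) (P : S → A → S → ℝ) (β : S → A → ℝ)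
    (q : S → A → ℝ) : S → A → ℝ := fun s a =>
  r s a + γ * ∑ s', P s a s' *
    (τ * Real.log (∑ a' ∈ Finset.univ.filter (fun a' => 0 < β s' a'), Real.exp (q s' a' / τ)))

lemma lse_one_side {A : Type*} (τ : ℝ) (hτ : 0 < τ) (t : Finset A) (ht : t.Nonempty)
    (f g : A → ℝ) (M : ℝ) (h : ∀ a ∈ t, f a ≤ g a + M) :
    τ * Real.log (∑ a ∈ t, Real.exp (f a / τ)) ≤
      M + τ * Real.log (∑ a ∈ t, Real.exp (g a / τ)) := by
  have hSg : 0 < ∑ a ∈ t, Real.exp (g a / τ) :=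
    Finset.sum_pos (fun a _ => Real.exp_pos _) ht
  have hle : (∑ a ∈ t, Real.exp (f a / τ)) ≤
      Real.exp (M / τ) * ∑ a ∈ t, Real.exp (g a / τ) := by
    rw [Finset.mul_sum]
    refine Finset.sum_le_sum fun a ha => ?_
    rw [← Real.exp_add]
    apply Real.exp_le_exp.mpr
    rw [← add_div]
    gcongr
    linarith [h a ha]
  have hlog : Real.log (∑ a ∈ t, Real.exp (f a / τ)) ≤
      M / τ + Real.log (∑ a ∈ t, Real.exp (g a / τ)) := by
    calc Real.log (∑ a ∈ t, Real.exp (f a / τ))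
        ≤ Real.log (Real.exp (M / τ) * ∑ a ∈ t, Real.exp (g a / τ)) :=
          Real.log_le_log (Finset.sum_pos (fun a _ => Real.exp_pos _) ht) hle
      _ = M / τ + Real.log (∑ a ∈ t, Real.exp (g a / τ)) := by
          rw [Real.log_mul (Real.exp_ne_zero _) (ne_of_gt hSg), Real.log_exp]
  have := mul_le_mul_of_nonneg_left hlog hτ.le
  calc τ * Real.log (∑ a ∈ t, Real.exp (f a / τ))
      ≤ τ * (M / τ + Real.log (∑ a ∈ t, Real.exp (g a / τ))) := this
    _ = M + τ * Real.log (∑ a ∈ t, Real.exp (g a / τ)) := by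
        field_simp

lemma lse_lip {A : Type*} (τ : ℝ) (hτ : 0 < τ) (t : Finset A) (ht : t.Nonempty)
    (f g : A → ℝ) (M : ℝ) (h : ∀ a ∈ t, |f a - g a| ≤ M) :
    |τ * Real.log (∑ a ∈ t, Real.exp (f a / τ)) -
      τ * Real.log (∑ a ∈ t, Real.exp (g a / τ))| ≤ M := by
  rw [abs_sub_le_iff]
  constructor
  · have := lse_one_side τ hτ t ht f g M
      (fun a ha => by have := (abs_le.mp (h a ha)).2; linarith)
    linarith
  · have := lse_one_side τ hτ t ht g f M
      (fun a ha => by have := (abs_le.mp (h a ha)).1; linarith)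
    linarith

/-- The in-sample softmax optimality operator is a `γ`-contraction in the sup norm. -/
theorem Tstar_contraction {S A : Type*} [Fintype S] [Fintype A] [Nonempty S] [Nonempty A]
    (r : S → A → ℝ) (γ : ℝ) (hγ0 : 0 ≤ γ) (hγ1 : γ < 1)
    (P : S → A → S → ℝ) (hP0 : ∀ s a s', 0 ≤ P s a s') (hP1 : ∀ s a, (∑ s', P s a s') = 1)
    (τ : ℝ) (hτ : 0 < τ)
    (β : S → A → ℝ) (hβ0 : ∀ s a, 0 ≤ β s a) (hβ1 : ∀ s, (∑ a, β s a) = 1)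
    (q₁ q₂ : S → A → ℝ) :
    (Finset.univ.sup' Finset.univ_nonempty
        (fun p : S × A => |Tstar r γ τ P β q₁ p.1 p.2 - Tstar r γ τ P β q₂ p.1 p.2|)) ≤
    γ * Finset.univ.sup' Finset.univ_nonempty (fun p : S × A => |q₁ p.1 p.2 - q₂ p.1 p.2|) := by
  set M := Finset.univ.sup' Finset.univ_nonempty (fun p : S × A => |q₁ p.1 p.2 - q₂ p.1 p.2|)
    with hM
  -- the support set is nonempty for each s'
  have hsupp : ∀ s' : S, (Finset.univ.filter (fun a' => 0 < β s' a')).Nonempty := by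
    intro s'
    by_contra hcon
    rw [Finset.not_nonempty_iff_eq_empty, Finset.filter_eq_empty_iff] at hcon
    have : (∑ a, β s' a) = 0 := by
      apply Finset.sum_eq_zero
      intro a _
      have := hβ0 s' a
      have := hcon (Finset.mem_univ a)
      linarith
    rw [hβ1 s'] at this
    norm_num at this
  -- Lipschitz for each s'
  have hL : ∀ s' : S,
      |τ * Real.log (∑ a' ∈ Finset.univ.filter (fun a' => 0 < β s' a'),
          Real.exp (q₁ s' a' / τ)) -
        τ * Real.log (∑ a' ∈ Finset.univ.filter (fun a' => 0 < β s' a'),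
          Real.exp (q₂ s' a' / τ))| ≤ M := by
    intro s'
    apply lse_lip τ hτ _ (hsupp s')
    intro a' _
    exact Finset.le_sup' (fun p : S × A => |q₁ p.1 p.2 - q₂ p.1 p.2|)
      (Finset.mem_univ (s', a'))
  apply Finset.sup'_le
  rintro ⟨s, a⟩ -
  simp only [Tstar]
  have key : |γ * ∑ s', P s a s' *
        (τ * Real.log (∑ a' ∈ Finset.univ.filter (fun a' => 0 < β s' a'),
          Real.exp (q₁ s' a' / τ))) -
      γ * ∑ s', P s a s' *
        (τ * Real.log (∑ a' ∈ Finset.univ.filter (fun a' => 0 < β s' a'),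
          Real.exp (q₂ s' a' / τ)))| ≤ γ * M := by
    rw [← mul_sub, abs_mul, abs_of_nonneg hγ0, ← Finset.sum_sub_distrib]
    apply mul_le_mul_of_nonneg_left _ hγ0
    calc |∑ s', (P s a s' *
            (τ * Real.log (∑ a' ∈ Finset.univ.filter (fun a' => 0 < β s' a'),
              Real.exp (q₁ s' a' / τ))) -
          P s a s' *
            (τ * Real.log (∑ a' ∈ Finset.univ.filter (fun a' => 0 < β s' a'),
              Real.exp (q₂ s' a' / τ))))|
        ≤ ∑ s', |P s a s' *
            (τ * Real.log (∑ a' ∈ Finset.univ.filter (fun a' => 0 < β s' a'),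
              Real.exp (q₁ s' a' / τ))) -
          P s a s' *
            (τ * Real.log (∑ a' ∈ Finset.univ.filter (fun a' => 0 < β s' a'),
              Real.exp (q₂ s' a' / τ)))| := Finset.abs_sum_le_sum_abs _ _
      _ ≤ ∑ s', P s a s' * M := by
          refine Finset.sum_le_sum fun s' _ => ?_
          rw [← mul_sub, abs_mul, abs_of_nonneg (hP0 s a s')]
          exact mul_le_mul_of_nonneg_left (hL s') (hP0 s a s')
      _ = M := by rw [← Finset.sum_mul, hP1 s a, one_mul]
  calc |(r s a + γ * ∑ s', P s a s' *
          (τ * Real.log (∑ a' ∈ Finset.univ.filter (fun a' => 0 < β s' a'),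
            Real.exp (q₁ s' a' / τ)))) -
        (r s a + γ * ∑ s', P s a s' *
          (τ * Real.log (∑ a' ∈ Finset.univ.filter (fun a' => 0 < β s' a'),
            Real.exp (q₂ s' a' / τ))))|
      = |γ * ∑ s', P s a s' *
          (τ * Real.log (∑ a' ∈ Finset.univ.filter (fun a' => 0 < β s' a'),
            Real.exp (q₁ s' a' / τ))) -
        γ * ∑ s', P s a s' *
          (τ * Real.log (∑ a' ∈ Finset.univ.filter (fun a' => 0 < β s' a'),
            Real.exp (q₂ s' a' / τ)))| := by rw [add_sub_add_left_eq_sub]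
    _ ≤ γ * M := key
end

section
/- The in-sample softmax optimality operator T*_β has a unique fixed point q̃*_β : S × A → ℝ (i.e., q̃*_β = T*_β q̃*_β), and for every initial q : S × A → ℝ the value-iteration sequence q_{k+1} = T*_β q_k converges in sup norm to q̃*_β. -/
/-!
`T*_β` is a `γ`-contraction in the sup norm: the temperature-scaled log-sum-exp
`x ↦ τ log ∑_{a ∈ t} exp (x a / τ)` is monotone and commutes with adding constants, hence is
1-Lipschitz for the sup norm as soon as `t` is nonempty, and averaging against `P(s,a)` does not
increase sup distances. The supports of `β(·|s')` are nonempty because `β(·|s')` sums to `1`.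
Banach's fixed point theorem then gives the unique fixed point and the convergence of value
iteration.
-/

open Finset

noncomputable def smoothMax {A : Type*} (τ : ℝ) (t : Finset A) (x : A → ℝ) : ℝ :=
  τ * Real.log (∑ a ∈ t, Real.exp (x a / τ))

section smoothMax

variable {A : Type*} {t : Finset A} {τ : ℝ}

theorem smoothMax_add_const (ht : t.Nonempty) (hτ : τ ≠ 0) (x : A → ℝ) (c : ℝ) :
    smoothMax τ t (fun a => x a + c) = smoothMax τ t x + c := by
  have hsum : 0 < ∑ a ∈ t, Real.exp (x a / τ) := sum_pos (fun a _ => Real.exp_pos _) ht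
  have hsplit : ∑ a ∈ t, Real.exp ((x a + c) / τ) =
      Real.exp (c / τ) * ∑ a ∈ t, Real.exp (x a / τ) := by
    rw [mul_sum]
    exact sum_congr rfl fun a _ => by rw [← Real.exp_add, add_div, add_comm]
  rw [smoothMax, smoothMax, hsplit, Real.log_mul (Real.exp_pos _).ne' hsum.ne', Real.log_exp]
  field_simp
  ring

theorem smoothMax_mono (ht : t.Nonempty) (hτ : 0 < τ) {x y : A → ℝ}
    (hxy : ∀ a ∈ t, x a ≤ y a) : smoothMax τ t x ≤ smoothMax τ t y := by
  have hsum : 0 < ∑ a ∈ t, Real.exp (x a / τ) := sum_pos (fun a _ => Real.exp_pos _) ht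
  refine mul_le_mul_of_nonneg_left (Real.log_le_log hsum ?_) hτ.le
  exact sum_le_sum fun a ha => Real.exp_le_exp.mpr (div_le_div_of_nonneg_right (hxy a ha) hτ.le)

theorem smoothMax_le_add (ht : t.Nonempty) (hτ : 0 < τ) {x y : A → ℝ} {M : ℝ}
    (hxy : ∀ a ∈ t, x a ≤ y a + M) : smoothMax τ t x ≤ smoothMax τ t y + M :=
  (smoothMax_mono ht hτ hxy).trans_eq (smoothMax_add_const ht hτ.ne' y M)

theorem abs_smoothMax_sub_le_dist [Fintype A] (ht : t.Nonempty) (hτ : 0 < τ) (x y : A → ℝ) :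
    |smoothMax τ t x - smoothMax τ t y| ≤ dist x y := by
  have hcoord : ∀ a, |x a - y a| ≤ dist x y := fun a => by
    rw [← Real.dist_eq]
    exact dist_le_pi_dist x y a
  rw [abs_sub_le_iff]
  constructor
  · have := smoothMax_le_add ht hτ (x := x) (y := y) (M := dist x y)
      fun a _ => by linarith [abs_le.mp (hcoord a)]
    linarith
  · have := smoothMax_le_add ht hτ (x := y) (y := x) (M := dist x y)
      fun a _ => by linarith [abs_le.mp (hcoord a)]
    linarith

end smoothMax

theorem Finset.filter_pos_nonempty_of_sum_pos {ι : Type*} {s : Finset ι} {f : ι → ℝ}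
    (h : 0 < ∑ i ∈ s, f i) : (s.filter fun i => 0 < f i).Nonempty := by
  by_contra hempty
  rw [not_nonempty_iff_eq_empty, filter_eq_empty_iff] at hempty
  exact h.not_ge (sum_nonpos fun i hi => not_lt.mp (hempty hi))

theorem abs_sum_mul_le_of_sum_eq_one {ι : Type*} [Fintype ι] {p f : ι → ℝ} {M : ℝ}
    (hp0 : ∀ i, 0 ≤ p i) (hp1 : ∑ i, p i = 1) (hf : ∀ i, |f i| ≤ M) :
    |∑ i, p i * f i| ≤ M :=
  calc |∑ i, p i * f i| ≤ ∑ i, |p i * f i| := abs_sum_le_sum_abs _ _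
    _ ≤ ∑ i, p i * M := sum_le_sum fun i _ => by
        rw [abs_mul, abs_of_nonneg (hp0 i)]
        exact mul_le_mul_of_nonneg_left (hf i) (hp0 i)
    _ = M := by rw [← sum_mul, hp1, one_mul]

theorem Finset.sup'_univ_abs_sub_eq_dist {S A : Type*} [Fintype S] [Fintype A]
    [Nonempty S] [Nonempty A] (f g : S → A → ℝ) :
    univ.sup' univ_nonempty (fun p : S × A => |f p.1 p.2 - g p.1 p.2|) = dist f g := by
  set m := univ.sup' univ_nonempty (fun p : S × A => |f p.1 p.2 - g p.1 p.2|)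
  have hle : ∀ s a, |f s a - g s a| ≤ m := fun s a =>
    le_sup' (fun p : S × A => |f p.1 p.2 - g p.1 p.2|) (mem_univ (s, a))
  have hm : 0 ≤ m := (abs_nonneg _).trans (hle (Classical.arbitrary S) (Classical.arbitrary A))
  refine le_antisymm (sup'_le _ _ fun p _ => ?_) ((dist_pi_le_iff hm).mpr fun s => ?_)
  · rw [← Real.dist_eq]
    exact (dist_le_pi_dist (f p.1) (g p.1) p.2).trans (dist_le_pi_dist f g p.1)
  · exact (dist_pi_le_iff hm).mpr fun a => (Real.dist_eq _ _).trans_le (hle s a)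

section Contraction

variable {S A : Type*} [Fintype S] [Fintype A] {r : S → A → ℝ} {γ τ : ℝ}
  {P : S → A → S → ℝ} {β : S → A → ℝ}

theorem Tstar_sub_Tstar (q q' : S → A → ℝ) (s : S) (a : A) :
    Tstar r γ τ P β q s a - Tstar r γ τ P β q' s a =
      γ * ∑ s', P s a s' * (smoothMax τ (univ.filter fun a' => 0 < β s' a') (q s') -
        smoothMax τ (univ.filter fun a' => 0 < β s' a') (q' s')) := by
  simp only [Tstar, smoothMax, mul_sub, sum_sub_distrib]
  ring

theorem dist_Tstar_le (hγ0 : 0 ≤ γ) (hP0 : ∀ s a s', 0 ≤ P s a s')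
    (hP1 : ∀ s a, ∑ s', P s a s' = 1) (hτ : 0 < τ) (hβ1 : ∀ s, ∑ a, β s a = 1)
    (q q' : S → A → ℝ) :
    dist (Tstar r γ τ P β q) (Tstar r γ τ P β q') ≤ γ * dist q q' := by
  have hd : 0 ≤ γ * dist q q' := mul_nonneg hγ0 dist_nonneg
  refine (dist_pi_le_iff hd).mpr fun s => (dist_pi_le_iff hd).mpr fun a => ?_
  rw [Real.dist_eq, Tstar_sub_Tstar, abs_mul, abs_of_nonneg hγ0]
  refine mul_le_mul_of_nonneg_left
    (abs_sum_mul_le_of_sum_eq_one (hP0 s a) (hP1 s a) fun s' => ?_) hγ0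
  have hsupp := filter_pos_nonempty_of_sum_pos ((hβ1 s').symm ▸ one_pos)
  exact (abs_smoothMax_sub_le_dist hsupp hτ _ _).trans (dist_le_pi_dist q q' s')

theorem Tstar_contractingWith (hγ0 : 0 ≤ γ) (hγ1 : γ < 1) (hP0 : ∀ s a s', 0 ≤ P s a s')
    (hP1 : ∀ s a, ∑ s', P s a s' = 1) (hτ : 0 < τ) (hβ1 : ∀ s, ∑ a, β s a = 1) :
    ContractingWith ⟨γ, hγ0⟩ (Tstar r γ τ P β) :=
  ⟨hγ1, LipschitzWith.of_dist_le_mul (dist_Tstar_le hγ0 hP0 hP1 hτ hβ1)⟩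

end Contraction

theorem Tstar_fixed_point_unique_and_value_iteration_general {S A : Type*}
    [Fintype S] [Fintype A] [Nonempty S] [Nonempty A]
    (r : S → A → ℝ) (γ : ℝ) (hγ0 : 0 ≤ γ) (hγ1 : γ < 1)
    (P : S → A → S → ℝ) (hP0 : ∀ s a s', 0 ≤ P s a s') (hP1 : ∀ s a, (∑ s', P s a s') = 1)
    (τ : ℝ) (hτ : 0 < τ)
    (β : S → A → ℝ) (hβ1 : ∀ s, (∑ a, β s a) = 1) :
    ∃ qstar : S → A → ℝ, Tstar r γ τ P β qstar = qstar ∧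
      (∀ q : S → A → ℝ, Tstar r γ τ P β q = q → q = qstar) ∧
      (∀ q0 : S → A → ℝ, Filter.Tendsto
        (fun k : ℕ => Finset.univ.sup' Finset.univ_nonempty
          (fun p : S × A => |((Tstar r γ τ P β)^[k] q0) p.1 p.2 - qstar p.1 p.2|))
        Filter.atTop (nhds 0)) := by
  have hT := Tstar_contractingWith (r := r) hγ0 hγ1 hP0 hP1 hτ hβ1
  refine ⟨hT.fixedPoint _, hT.fixedPoint_isFixedPt, fun q hq => hT.fixedPoint_unique hq,
    fun q0 => ?_⟩
  simp only [sup'_univ_abs_sub_eq_dist]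
  exact tendsto_iff_dist_tendsto_zero.mp (hT.tendsto_iterate_fixedPoint q0)

/-- `T*_β` has a unique fixed point, and value iteration `q_{k+1} = T*_β q_k` converges to it
in sup norm from any initial `q`. -/
theorem Tstar_fixed_point_unique_and_value_iteration {S A : Type*}
    [Fintype S] [Fintype A] [Nonempty S] [Nonempty A]
    (r : S → A → ℝ) (γ : ℝ) (hγ0 : 0 ≤ γ) (hγ1 : γ < 1)
    (P : S → A → S → ℝ) (hP0 : ∀ s a s', 0 ≤ P s a s') (hP1 : ∀ s a, (∑ s', P s a s') = 1)
    (τ : ℝ) (hτ : 0 < τ)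
    (β : S → A → ℝ) (hβ0 : ∀ s a, 0 ≤ β s a) (hβ1 : ∀ s, (∑ a, β s a) = 1) :
    ∃ qstar : S → A → ℝ, Tstar r γ τ P β qstar = qstar ∧
      (∀ q : S → A → ℝ, Tstar r γ τ P β q = q → q = qstar) ∧
      (∀ q0 : S → A → ℝ, Filter.Tendsto
        (fun k : ℕ => Finset.univ.sup' Finset.univ_nonempty
          (fun p : S × A => |((Tstar r γ τ P β)^[k] q0) p.1 p.2 - qstar p.1 p.2|))
        Filter.atTop (nhds 0)) :=
  Tstar_fixed_point_unique_and_value_iteration_general r γ hγ0 hγ1 P hP0 hP1 τ hτ β hβ1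
end

section
/- For each τ > 0 let q̃_τ : S × A → ℝ satisfy the in-sample softmax optimality equation q̃_τ = T*_{β,τ} q̃_τ, and let q* : S × A → ℝ satisfy the in-sample (hard-max) Bellman optimality equation q*(s,a) = r(s,a) + γ Σ_{s'} P(s,a)(s') · max_{a' ∈ supp β(·|s')} q*(s',a'). Then q̃_τ(s,a) → q*(s,a) as τ → 0 from above, for every (s,a) ∈ S × A. -/
open Finset

lemma sup'_le_softmax {A : Type*} (F : Finset A) (hF : F.Nonempty) (q : A → ℝ) {τ : ℝ}
    (hτ : 0 < τ) :
    F.sup' hF q ≤ τ * Real.log (∑ a ∈ F, Real.exp (q a / τ)) := by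
  obtain ⟨a, ha, hEq⟩ := F.exists_mem_eq_sup' hF q
  have hs : 0 < ∑ a ∈ F, Real.exp (q a / τ) :=
    Finset.sum_pos (fun b _ => Real.exp_pos _) hF
  have h1 : Real.exp (F.sup' hF q / τ) ≤ ∑ a ∈ F, Real.exp (q a / τ) := by
    rw [hEq]
    exact Finset.single_le_sum (f := fun b => Real.exp (q b / τ)) (fun b _ => (Real.exp_pos _).le) ha
  have := (Real.le_log_iff_exp_le hs).2 h1
  rw [div_le_iff₀ hτ] at this
  linarith [this]

lemma softmax_le_sup' {A : Type*} (F : Finset A) (hF : F.Nonempty) (q : A → ℝ) {τ : ℝ}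
    (hτ : 0 < τ) :
    τ * Real.log (∑ a ∈ F, Real.exp (q a / τ)) ≤ F.sup' hF q + τ * Real.log F.card := by
  have hs : 0 < ∑ a ∈ F, Real.exp (q a / τ) :=
    Finset.sum_pos (fun b _ => Real.exp_pos _) hF
  have h1 : ∑ a ∈ F, Real.exp (q a / τ) ≤ F.card * Real.exp (F.sup' hF q / τ) := by
    calc ∑ a ∈ F, Real.exp (q a / τ) ≤ ∑ a ∈ F, Real.exp (F.sup' hF q / τ) := by
          apply Finset.sum_le_sum
          intro b hb
          apply Real.exp_le_exp.2
          gcongr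
          exact Finset.le_sup' q hb
      _ = F.card * Real.exp (F.sup' hF q / τ) := by
          rw [Finset.sum_const, nsmul_eq_mul]
  have hcard : (0:ℝ) < F.card := by exact_mod_cast hF.card_pos
  have h2 : Real.log (∑ a ∈ F, Real.exp (q a / τ)) ≤
      Real.log F.card + F.sup' hF q / τ := by
    calc Real.log (∑ a ∈ F, Real.exp (q a / τ)) ≤
        Real.log (F.card * Real.exp (F.sup' hF q / τ)) := Real.log_le_log hs h1
      _ = Real.log F.card + F.sup' hF q / τ := by
          rw [Real.log_mul (ne_of_gt hcard) (Real.exp_ne_zero _), Real.log_exp]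
  have := mul_le_mul_of_nonneg_left h2 hτ.le
  rw [mul_add] at this
  have hdiv : τ * (F.sup' hF q / τ) = F.sup' hF q := by field_simp
  linarith [this, hdiv.le]

lemma abs_sup'_sub_sup'_le {A : Type*} (F : Finset A) (h : F.Nonempty) (f g : A → ℝ) (M : ℝ)
    (hb : ∀ a ∈ F, |f a - g a| ≤ M) : |F.sup' h f - F.sup' h g| ≤ M := by
  rw [abs_sub_le_iff]
  constructor
  · rw [sub_le_iff_le_add]
    apply Finset.sup'_le
    intro a ha
    have := abs_le.1 (hb a ha)
    linarith [Finset.le_sup' g ha]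
  · rw [sub_le_iff_le_add]
    apply Finset.sup'_le
    intro a ha
    have := abs_le.1 (hb a ha)
    linarith [Finset.le_sup' f ha]

/-- If `q̃_τ = T*_{β,τ} q̃_τ` for each `τ > 0` and `q*` satisfies the in-sample (hard-max)
Bellman optimality equation, then `q̃_τ → q*` pointwise as `τ → 0⁺`.  (The nonemptiness of
the supports of `β`, derivable from `∑_a β(a|s) = 1`, is taken as a hypothesis so the
in-sample hard max can be expressed.) -/
theorem insample_softmax_value_tendsto_hardmax_value {S A : Type*}
    [Fintype S] [Fintype A] [Nonempty S] [Nonempty A]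
    (r : S → A → ℝ) (γ : ℝ) (hγ0 : 0 ≤ γ) (hγ1 : γ < 1)
    (P : S → A → S → ℝ) (hP0 : ∀ s a s', 0 ≤ P s a s') (hP1 : ∀ s a, (∑ s', P s a s') = 1)
    (β : S → A → ℝ) (hβ0 : ∀ s a, 0 ≤ β s a) (hβ1 : ∀ s, (∑ a, β s a) = 1)
    (hne : ∀ s, (Finset.univ.filter (fun a => 0 < β s a)).Nonempty)
    (qt : ℝ → S → A → ℝ) (hqt : ∀ τ : ℝ, 0 < τ → qt τ = Tstar r γ τ P β (qt τ))
    (qstar : S → A → ℝ)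
    (hqstar : ∀ s a, qstar s a = r s a + γ * ∑ s', P s a s' *
        ((Finset.univ.filter (fun a' => 0 < β s' a')).sup' (hne s') (fun a' => qstar s' a'))) :
    ∀ s a, Filter.Tendsto (fun τ : ℝ => qt τ s a)
      (nhdsWithin 0 (Set.Ioi 0)) (nhds (qstar s a)) := by
  have hA1 : (1:ℝ) ≤ Fintype.card A := by exact_mod_cast Fintype.card_pos
  set L := Real.log (Fintype.card A) with hLdef
  have hL : 0 ≤ L := Real.log_nonneg hA1
  have h1γ : 0 < 1 - γ := by linarith
  set C := γ * L / (1 - γ) with hCdef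
  have hC : 0 ≤ C := by positivity
  have key : ∀ τ : ℝ, 0 < τ → ∀ s a, |qt τ s a - qstar s a| ≤ C * τ := by
    intro τ hτ
    set F := fun s' => Finset.univ.filter (fun a' => 0 < β s' a') with hFdef
    set g := fun s' => τ * Real.log (∑ a' ∈ F s', Real.exp (qt τ s' a' / τ)) with hgdef
    set h := fun s' => (F s').sup' (hne s') (fun a' => qstar s' a') with hhdef
    set M := (Finset.univ : Finset (S × A)).sup' Finset.univ_nonempty
        (fun p => |qt τ p.1 p.2 - qstar p.1 p.2|) with hMdef
    have hbound : ∀ s', |g s' - h s'| ≤ M + τ * L := by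
      intro s'
      have hlo := sup'_le_softmax (F s') (hne s') (fun a' => qt τ s' a') hτ
      have hhi := softmax_le_sup' (F s') (hne s') (fun a' => qt τ s' a') hτ
      have hsup : |(F s').sup' (hne s') (fun a' => qt τ s' a') - h s'| ≤ M := by
        apply abs_sup'_sub_sup'_le
        intro a' _
        exact Finset.le_sup' (f := fun p : S × A => |qt τ p.1 p.2 - qstar p.1 p.2|)
          (Finset.mem_univ (s', a'))
      have hcard : τ * Real.log ((F s').card) ≤ τ * L := by
        apply mul_le_mul_of_nonneg_left _ hτ.le
        apply Real.log_le_log (by exact_mod_cast (hne s').card_pos)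
        exact_mod_cast Finset.card_le_univ (F s')
      have hsup' := abs_le.1 hsup
      rw [abs_le]
      constructor <;> [skip; skip] <;>
        simp only [hgdef] at hlo hhi ⊢ <;>
        [nlinarith [hsup'.1, hsup'.2]; nlinarith [hsup'.1, hsup'.2]]
    have hpoint : ∀ s a, |qt τ s a - qstar s a| ≤ γ * (M + τ * L) := by
      intro s a
      have hq1 : qt τ s a = r s a + γ * ∑ s', P s a s' * g s' := by
        conv_lhs => rw [hqt τ hτ]
        simp only [Tstar, hgdef, hFdef]
      have hq2 : qstar s a = r s a + γ * ∑ s', P s a s' * h s' := hqstar s a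
      have hXY : |(∑ s', P s a s' * g s') - ∑ s', P s a s' * h s'| ≤ M + τ * L := by
        rw [← Finset.sum_sub_distrib]
        calc |∑ s', (P s a s' * g s' - P s a s' * h s')|
            ≤ ∑ s', |P s a s' * g s' - P s a s' * h s'| := Finset.abs_sum_le_sum_abs _ _
          _ = ∑ s', P s a s' * |g s' - h s'| := by
              apply Finset.sum_congr rfl
              intro s' _
              rw [← mul_sub, abs_mul, abs_of_nonneg (hP0 s a s')]
          _ ≤ ∑ s', P s a s' * (M + τ * L) := by
              apply Finset.sum_le_sum
              intro s' _
              exact mul_le_mul_of_nonneg_left (hbound s') (hP0 s a s')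
          _ = M + τ * L := by rw [← Finset.sum_mul, hP1, one_mul]
      calc |qt τ s a - qstar s a|
          = γ * |(∑ s', P s a s' * g s') - ∑ s', P s a s' * h s'| := by
            rw [hq1, hq2]
            rw [show (r s a + γ * ∑ s', P s a s' * g s') -
                (r s a + γ * ∑ s', P s a s' * h s') =
                γ * ((∑ s', P s a s' * g s') - ∑ s', P s a s' * h s') from by ring,
              abs_mul, abs_of_nonneg hγ0]
        _ ≤ γ * (M + τ * L) := mul_le_mul_of_nonneg_left hXY hγ0
    have hMle : M ≤ γ * (M + τ * L) := by
      apply Finset.sup'_le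
      intro p _
      exact hpoint p.1 p.2
    have hMC : M ≤ C * τ := by
      rw [hCdef, div_mul_eq_mul_div, le_div_iff₀ h1γ]
      nlinarith
    intro s a
    calc |qt τ s a - qstar s a|
        ≤ M := Finset.le_sup' (f := fun p : S × A => |qt τ p.1 p.2 - qstar p.1 p.2|)
          (Finset.mem_univ (s, a))
      _ ≤ C * τ := hMC
  intro s a
  have h0 : Filter.Tendsto (fun τ : ℝ => C * τ) (nhdsWithin 0 (Set.Ioi 0)) (nhds 0) := by
    have h1 : Filter.Tendsto (fun τ : ℝ => C * τ) (nhds 0) (nhds (C * 0)) :=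
      (continuous_const.mul continuous_id).tendsto 0
    simpa using h1.mono_left nhdsWithin_le_nhds
  rw [← tendsto_sub_nhds_zero_iff]
  apply squeeze_zero_norm' _ h0
  filter_upwards [self_mem_nhdsWithin] with τ hτ
  simpa [Real.norm_eq_abs] using key τ hτ s a
end

section
/- For each τ > 0 let q̃_τ satisfy q̃_τ = T*_{β,τ} q̃_τ, let q* satisfy the in-sample hard-max Bellman optimality equation q*(s,a) = r(s,a) + γ Σ_{s'} P(s,a)(s') · max_{a' ∈ supp β(·|s')} q*(s',a'), and suppose that for each state s there is a unique action a*(s) ∈ supp β(·|s) with q*(s,a*(s)) > q*(s,a) for all other a ∈ supp β(·|s). Then the in-sample softmax optimal policy π̃_τ(a|s) = exp(q̃_τ(s,a)/τ) / Σ_{a' ∈ supp β(·|s)} exp(q̃_τ(s,a')/τ) for a ∈ supp β(·|s) (and 0 otherwise) converges pointwise, as τ → 0 from above, to the in-sample optimal policy π*(a|s) = 1 if a = a*(s) and 0 otherwise. -/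
open Finset

open Filter Topology

private lemma lse_mono_bound {A : Type*} {F : Finset A} (hF : F.Nonempty)
    {τ : ℝ} (hτ : 0 < τ) (f g : A → ℝ) {D : ℝ}
    (h : ∀ a ∈ F, f a ≤ g a + D) :
    τ * Real.log (∑ a ∈ F, Real.exp (f a / τ)) ≤
      τ * Real.log (∑ a ∈ F, Real.exp (g a / τ)) + D := by
  have hposf : 0 < ∑ a ∈ F, Real.exp (f a / τ) :=
    Finset.sum_pos (fun a _ => Real.exp_pos _) hF
  have hposg : 0 < ∑ a ∈ F, Real.exp (g a / τ) :=
    Finset.sum_pos (fun a _ => Real.exp_pos _) hF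
  have hle : (∑ a ∈ F, Real.exp (f a / τ)) ≤
      (∑ a ∈ F, Real.exp (g a / τ)) * Real.exp (D / τ) := by
    rw [Finset.sum_mul]
    refine Finset.sum_le_sum fun a ha => ?_
    rw [← Real.exp_add, ← add_div]
    exact Real.exp_le_exp.2 (by gcongr; exact h a ha)
  have hlog := Real.log_le_log hposf hle
  rw [Real.log_mul (ne_of_gt hposg) (Real.exp_ne_zero _), Real.log_exp] at hlog
  have := mul_le_mul_of_nonneg_left hlog hτ.le
  rw [mul_add, mul_div_cancel₀ _ (ne_of_gt hτ)] at this
  exact this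

private lemma sup_le_lse {A : Type*} {F : Finset A} (hF : F.Nonempty)
    {τ : ℝ} (hτ : 0 < τ) (g : A → ℝ) :
    F.sup' hF g ≤ τ * Real.log (∑ a ∈ F, Real.exp (g a / τ)) := by
  obtain ⟨a, ha, hsup⟩ := F.exists_mem_eq_sup' hF g
  rw [hsup]
  have h1 : Real.exp (g a / τ) ≤ ∑ a' ∈ F, Real.exp (g a' / τ) :=
    Finset.single_le_sum (f := fun a' => Real.exp (g a' / τ)) (fun a' _ => (Real.exp_pos _).le) ha
  have hlog := Real.log_le_log (Real.exp_pos _) h1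
  rw [Real.log_exp] at hlog
  have := mul_le_mul_of_nonneg_left hlog hτ.le
  rwa [mul_div_cancel₀ _ (ne_of_gt hτ)] at this

private lemma lse_le_sup {A : Type*} {F : Finset A} (hF : F.Nonempty)
    {τ : ℝ} (hτ : 0 < τ) (g : A → ℝ) :
    τ * Real.log (∑ a ∈ F, Real.exp (g a / τ)) ≤
      F.sup' hF g + τ * Real.log F.card := by
  have hposg : 0 < ∑ a ∈ F, Real.exp (g a / τ) :=
    Finset.sum_pos (fun a _ => Real.exp_pos _) hF
  have h1 : (∑ a ∈ F, Real.exp (g a / τ)) ≤ F.card * Real.exp (F.sup' hF g / τ) := by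
    have := Finset.sum_le_card_nsmul F (fun a => Real.exp (g a / τ))
      (Real.exp (F.sup' hF g / τ))
      (fun a ha => Real.exp_le_exp.2 (by gcongr; exact Finset.le_sup' g ha))
    rwa [nsmul_eq_mul] at this
  have hcard : (0:ℝ) < F.card := by exact_mod_cast Finset.card_pos.2 hF
  have hlog := Real.log_le_log hposg h1
  rw [Real.log_mul (ne_of_gt hcard) (Real.exp_ne_zero _), Real.log_exp] at hlog
  have := mul_le_mul_of_nonneg_left hlog hτ.le
  rw [mul_add, mul_div_cancel₀ _ (ne_of_gt hτ)] at this
  linarith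


/-- If `q̃_τ = T*_{β,τ} q̃_τ` for each `τ > 0`, `q*` satisfies the in-sample hard-max Bellman
optimality equation, and for each state `s` the action `a*(s) ∈ supp β(·|s)` is the unique
maximizer of `q*(s,·)` over `supp β(·|s)`, then the in-sample softmax optimal policy `π̃_τ`
converges pointwise as `τ → 0⁺` to the in-sample optimal (greedy) policy `π*`. -/
theorem insample_softmax_policy_tendsto_insample_optimal {S A : Type*}
    [Fintype S] [Fintype A] [Nonempty S] [Nonempty A] [DecidableEq A]
    (r : S → A → ℝ) (γ : ℝ) (hγ0 : 0 ≤ γ) (hγ1 : γ < 1)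
    (P : S → A → S → ℝ) (hP0 : ∀ s a s', 0 ≤ P s a s') (hP1 : ∀ s a, (∑ s', P s a s') = 1)
    (β : S → A → ℝ) (hβ0 : ∀ s a, 0 ≤ β s a) (hβ1 : ∀ s, (∑ a, β s a) = 1)
    (hne : ∀ s, (Finset.univ.filter (fun a => 0 < β s a)).Nonempty)
    (qt : ℝ → S → A → ℝ) (hqt : ∀ τ : ℝ, 0 < τ → qt τ = Tstar r γ τ P β (qt τ))
    (qstar : S → A → ℝ)
    (hqstar : ∀ s a, qstar s a = r s a + γ * ∑ s', P s a s' *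
        ((Finset.univ.filter (fun a' => 0 < β s' a')).sup' (hne s') (fun a' => qstar s' a')))
    (astar : S → A) (hstar : ∀ s, 0 < β s (astar s))
    (huniq : ∀ s a, 0 < β s a → a ≠ astar s → qstar s a < qstar s (astar s)) :
    ∀ s a, Filter.Tendsto
      (fun τ : ℝ =>
        if 0 < β s a then
          Real.exp (qt τ s a / τ) /
            ∑ a' ∈ Finset.univ.filter (fun a' => 0 < β s a'), Real.exp (qt τ s a' / τ)
        else 0)
      (nhdsWithin 0 (Set.Ioi 0))
      (nhds (if a = astar s then 1 else 0)) := by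
  classical
  have hC : (0:ℝ) ≤ Real.log (Fintype.card A) :=
    Real.log_nonneg (by exact_mod_cast Fintype.card_pos (α := A))
  set C := Real.log (Fintype.card A) with hCdef
  have h1γ : (0:ℝ) < 1 - γ := by linarith
  set c := γ * C / (1 - γ) with hcdef
  have hc : 0 ≤ c := div_nonneg (mul_nonneg hγ0 hC) h1γ.le
  -- Step 1: uniform bound |qt τ - qstar| ≤ c * τ
  have key : ∀ τ : ℝ, 0 < τ → ∀ s a, |qt τ s a - qstar s a| ≤ c * τ := by
    intro τ hτ
    set D := (Finset.univ : Finset (S × A)).sup' Finset.univ_nonempty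
      (fun p => |qt τ p.1 p.2 - qstar p.1 p.2|) with hDdef
    have hDle : ∀ s a, |qt τ s a - qstar s a| ≤ D :=
      fun s a => Finset.le_sup' (fun p : S × A => |qt τ p.1 p.2 - qstar p.1 p.2|)
        (Finset.mem_univ (s, a))
    have hτC : 0 ≤ τ * C := mul_nonneg hτ.le hC
    have hLM : ∀ s', |(τ * Real.log (∑ a' ∈ Finset.univ.filter (fun a' => 0 < β s' a'),
          Real.exp (qt τ s' a' / τ))) -
        ((Finset.univ.filter (fun a' => 0 < β s' a')).sup' (hne s')
          (fun a' => qstar s' a'))| ≤ D + τ * C := by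
      intro s'
      have hFcard : (Finset.univ.filter (fun a' => 0 < β s' a')).card ≤ Fintype.card A :=
        (Finset.card_filter_le _ _).trans_eq Finset.card_univ
      have hlogcard : Real.log (Finset.univ.filter (fun a' => 0 < β s' a')).card ≤ C :=
        Real.log_le_log (by exact_mod_cast Finset.card_pos.2 (hne s'))
          (by exact_mod_cast hFcard)
      have hτlog : τ * Real.log (Finset.univ.filter (fun a' => 0 < β s' a')).card ≤ τ * C :=
        mul_le_mul_of_nonneg_left hlogcard hτ.le
      have h1 := lse_mono_bound (hne s') hτ (fun a' => qt τ s' a') (fun a' => qstar s' a')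
        (D := D) (fun a' _ => by have := abs_le.1 (hDle s' a'); linarith [this.2])
      have h4 := lse_mono_bound (hne s') hτ (fun a' => qstar s' a') (fun a' => qt τ s' a')
        (D := D) (fun a' _ => by have := abs_le.1 (hDle s' a'); linarith [this.1])
      have h2 := lse_le_sup (hne s') hτ (fun a' => qstar s' a')
      have h3 := sup_le_lse (hne s') hτ (fun a' => qstar s' a')
      rw [abs_le]
      exact ⟨by linarith, by linarith⟩
    have step : ∀ s a, |qt τ s a - qstar s a| ≤ γ * (D + τ * C) := by
      intro s a
      have hq1 : qt τ s a = r s a + γ * ∑ s', P s a s' *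
          (τ * Real.log (∑ a' ∈ Finset.univ.filter (fun a' => 0 < β s' a'),
            Real.exp (qt τ s' a' / τ))) :=
        congrFun (congrFun (hqt τ hτ) s) a
      have hdiff : qt τ s a - qstar s a = γ * ∑ s', P s a s' *
          ((τ * Real.log (∑ a' ∈ Finset.univ.filter (fun a' => 0 < β s' a'),
            Real.exp (qt τ s' a' / τ))) -
           ((Finset.univ.filter (fun a' => 0 < β s' a')).sup' (hne s')
             (fun a' => qstar s' a'))) := by
        rw [hq1, hqstar s a]
        simp only [mul_sub, Finset.sum_sub_distrib]
        ring
      rw [hdiff, abs_mul, abs_of_nonneg hγ0]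
      refine mul_le_mul_of_nonneg_left ?_ hγ0
      calc |∑ s', P s a s' *
            ((τ * Real.log (∑ a' ∈ Finset.univ.filter (fun a' => 0 < β s' a'),
              Real.exp (qt τ s' a' / τ))) -
             ((Finset.univ.filter (fun a' => 0 < β s' a')).sup' (hne s')
               (fun a' => qstar s' a')))|
          ≤ ∑ s', |P s a s' *
            ((τ * Real.log (∑ a' ∈ Finset.univ.filter (fun a' => 0 < β s' a'),
              Real.exp (qt τ s' a' / τ))) -
             ((Finset.univ.filter (fun a' => 0 < β s' a')).sup' (hne s')
               (fun a' => qstar s' a')))| := Finset.abs_sum_le_sum_abs _ _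
        _ ≤ ∑ s', P s a s' * (D + τ * C) := by
            refine Finset.sum_le_sum fun s' _ => ?_
            rw [abs_mul, abs_of_nonneg (hP0 s a s')]
            exact mul_le_mul_of_nonneg_left (hLM s') (hP0 s a s')
        _ = D + τ * C := by rw [← Finset.sum_mul, hP1, one_mul]
    have hD : D ≤ γ * (D + τ * C) :=
      Finset.sup'_le _ _ (fun p _ => step p.1 p.2)
    have hD2 : D ≤ c * τ := by
      rw [hcdef, div_mul_eq_mul_div, le_div_iff₀ h1γ]
      nlinarith [hD]
    exact fun s a => (hDle s a).trans hD2
  -- Step 2: vanishing of exponential ratios for suboptimal actions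
  have key2 : ∀ s a, 0 < β s a → a ≠ astar s →
      Filter.Tendsto (fun τ : ℝ => Real.exp ((qt τ s a - qt τ s (astar s)) / τ))
        (nhdsWithin 0 (Set.Ioi 0)) (nhds 0) := by
    intro s a hβa hnea
    have hδ : 0 < qstar s (astar s) - qstar s a := sub_pos.2 (huniq s a hβa hnea)
    set δ := qstar s (astar s) - qstar s a with hδdef
    have hbound : ∀ τ ∈ Set.Ioi (0:ℝ),
        Real.exp ((qt τ s a - qt τ s (astar s)) / τ) ≤
          Real.exp (2 * c) * Real.exp (-δ / τ) := by
      intro τ hτm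
      have hτ : (0:ℝ) < τ := hτm
      rw [← Real.exp_add]
      apply Real.exp_le_exp.2
      have h1 := abs_le.1 (key τ hτ s a)
      have h2 := abs_le.1 (key τ hτ s (astar s))
      have hnum : qt τ s a - qt τ s (astar s) ≤ -δ + 2 * c * τ := by
        rw [hδdef]; linarith [h1.2, h2.1]
      have hstep : (qt τ s a - qt τ s (astar s)) / τ ≤ (-δ + 2 * c * τ) / τ :=
        div_le_div_of_nonneg_right hnum hτ.le
      have heq : (-δ + 2 * c * τ) / τ = 2 * c + -δ / τ := by
        field_simp
        ring
      linarith [hstep, heq.le, heq.ge]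
    have hlim : Filter.Tendsto (fun τ : ℝ => Real.exp (2 * c) * Real.exp (-δ / τ))
        (nhdsWithin 0 (Set.Ioi 0)) (nhds (Real.exp (2 * c) * 0)) := by
      apply Filter.Tendsto.const_mul
      have h1 : Filter.Tendsto (fun τ : ℝ => δ * τ⁻¹) (nhdsWithin 0 (Set.Ioi 0))
          Filter.atTop := Filter.Tendsto.const_mul_atTop hδ tendsto_inv_nhdsGT_zero
      have hfe : (fun τ : ℝ => Real.exp (-δ / τ)) =
          fun τ : ℝ => Real.exp (-(δ * τ⁻¹)) := by
        funext τ; rw [neg_div, div_eq_mul_inv]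
      rw [hfe]
      exact Real.tendsto_exp_atBot.comp (tendsto_neg_atTop_atBot.comp h1)
    rw [mul_zero] at hlim
    refine squeeze_zero' (Filter.Eventually.of_forall fun τ => (Real.exp_pos _).le) ?_ hlim
    filter_upwards [self_mem_nhdsWithin] with τ hτ
    exact hbound τ hτ
  -- Main argument
  intro s a
  by_cases hβa : 0 < β s a
  · simp only [if_pos hβa]
    by_cases has : a = astar s
    · subst has
      simp only [if_pos rfl]
      have hden : Filter.Tendsto
          (fun τ : ℝ => ∑ a' ∈ Finset.univ.filter (fun a' => 0 < β s a'),
            Real.exp ((qt τ s a' - qt τ s (astar s)) / τ))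
          (nhdsWithin 0 (Set.Ioi 0)) (nhds 1) := by
        have hsum : (1:ℝ) = ∑ a' ∈ Finset.univ.filter (fun a' => 0 < β s a'),
            (if a' = astar s then (1:ℝ) else 0) := by
          rw [Finset.sum_ite_eq']
          simp [hstar s]
        rw [hsum]
        apply tendsto_finset_sum
        intro a' ha'
        by_cases h' : a' = astar s
        · subst h'
          simp only [if_pos rfl, sub_self, zero_div, Real.exp_zero]
          exact tendsto_const_nhds
        · simp only [if_neg h']
          exact key2 s a' (Finset.mem_filter.1 ha').2 h'
      have hten := hden.inv₀ one_ne_zero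
      rw [inv_one] at hten
      apply hten.congr'
      filter_upwards [self_mem_nhdsWithin] with τ hτ
      have heq : ∑ a' ∈ Finset.univ.filter (fun a' => 0 < β s a'),
          Real.exp ((qt τ s a' - qt τ s (astar s)) / τ)
          = (∑ a' ∈ Finset.univ.filter (fun a' => 0 < β s a'),
              Real.exp (qt τ s a' / τ)) * (Real.exp (qt τ s (astar s) / τ))⁻¹ := by
        rw [Finset.sum_mul]
        refine Finset.sum_congr rfl fun a' _ => ?_
        rw [sub_div, Real.exp_sub, div_eq_mul_inv]
      rw [heq, mul_inv, inv_inv, mul_comm]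
      exact (div_eq_mul_inv _ _).symm
    · simp only [if_neg has]
      refine squeeze_zero' (Filter.Eventually.of_forall fun τ =>
        div_nonneg (Real.exp_pos _).le
          (Finset.sum_pos (fun a' _ => Real.exp_pos _) (hne s)).le)
        ?_ (key2 s a hβa has)
      filter_upwards [self_mem_nhdsWithin] with τ hτ
      have hmem : astar s ∈ Finset.univ.filter (fun a' => 0 < β s a') := by
        simp [hstar s]
      have hden : Real.exp (qt τ s (astar s) / τ) ≤
          ∑ a' ∈ Finset.univ.filter (fun a' => 0 < β s a'), Real.exp (qt τ s a' / τ) :=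
        Finset.single_le_sum (f := fun a' => Real.exp (qt τ s a' / τ))
          (fun a' _ => (Real.exp_pos _).le) hmem
      calc Real.exp (qt τ s a / τ) /
            ∑ a' ∈ Finset.univ.filter (fun a' => 0 < β s a'), Real.exp (qt τ s a' / τ)
          ≤ Real.exp (qt τ s a / τ) / Real.exp (qt τ s (astar s) / τ) := by
            gcongr
        _ = Real.exp ((qt τ s a - qt τ s (astar s)) / τ) := by
            rw [← Real.exp_sub, sub_div]
  · simp only [if_neg hβa]
    have hnea : a ≠ astar s := fun h => hβa (h ▸ hstar s)
    simp only [if_neg hnea]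
    exact tendsto_const_nhds
end

section
/- Let q : S × A → ℝ satisfy q(s,a) ≥ (T*_β q)(s,a) for all (s,a). Then for every policy π with π ⪯ β and every q̃^π : S × A → ℝ with q̃^π = T^π q̃^π, one has q(s,a) ≥ q̃^π(s,a) for all (s,a). -/
open Finset

/-- The on-policy entropy-regularized Bellman operator
`(T^π q)(s,a) = r(s,a) + γ ∑_{s'} P(s,a)(s') ∑_{a' ∈ supp π(·|s')} π(a'|s')(q(s',a') − τ log π(a'|s'))`. -/
noncomputable def Ton {S A : Type*} [Fintype S] [Fintype A]
    (r : S → A → ℝ) (γ τ : ℝ) (P : S → A → S → ℝ) (π : S → A → ℝ)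
    (q : S → A → ℝ) : S → A → ℝ := fun s a =>
  r s a + γ * ∑ s', P s a s' *
    (∑ a' ∈ Finset.univ.filter (fun a' => 0 < π s' a'),
      π s' a' * (q s' a' - τ * Real.log (π s' a')))

/-! The Gibbs variational inequality bounds the entropy-regularized backup of any `π ⪯ β` by the
in-sample softmax backup, so `T^π q ≤ T*_β q ≤ q`. Since `T^π` is monotone and a `γ`-contraction
from above, the comparison principle for its sub- and supersolutions gives `q̃^π ≤ q`. -/

theorem Finset.sum_mul_le_of_forall_le {ι : Type*} {t : Finset ι} {w f : ι → ℝ} {M : ℝ}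
    (hw0 : ∀ i ∈ t, 0 ≤ w i) (hw1 : ∑ i ∈ t, w i = 1) (hf : ∀ i ∈ t, f i ≤ M) :
    ∑ i ∈ t, w i * f i ≤ M :=
  calc ∑ i ∈ t, w i * f i ≤ ∑ i ∈ t, w i * M :=
        sum_le_sum fun i hi => mul_le_mul_of_nonneg_left (hf i hi) (hw0 i hi)
    _ = M := by rw [← sum_mul, hw1, one_mul]

theorem sum_filter_pos_eq_one {A : Type*} [Fintype A] {w : A → ℝ}
    (hw0 : ∀ a, 0 ≤ w a) (hw1 : ∑ a, w a = 1) :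
    ∑ a ∈ univ.filter (fun a => 0 < w a), w a = 1 := by
  rw [← hw1]
  exact sum_filter_of_ne fun a _ h => (hw0 a).lt_of_ne' h

/-- Gibbs variational inequality. -/
theorem sum_mul_sub_log_le_log_sum_exp {A : Type*} [Fintype A] {τ : ℝ} (hτ : 0 < τ)
    {w : A → ℝ} (hw0 : ∀ a, 0 ≤ w a) (hw1 : ∑ a, w a = 1) (x : A → ℝ) {F : Finset A}
    (hF : ∀ a, 0 < w a → a ∈ F) :
    ∑ a ∈ univ.filter (fun a => 0 < w a), w a * (x a - τ * Real.log (w a))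
      ≤ τ * Real.log (∑ a ∈ F, Real.exp (x a / τ)) := by
  set t := univ.filter (fun a => 0 < w a)
  set e := fun a => Real.exp (x a / τ)
  have hpos : ∀ a ∈ t, 0 < w a := fun a ha => (mem_filter.mp ha).2
  have ht : t.Nonempty :=
    nonempty_of_sum_ne_zero (by rw [sum_filter_pos_eq_one hw0 hw1]; exact one_ne_zero)
  have hterm : ∀ a ∈ t,
      w a * (x a - τ * Real.log (w a)) = τ * (w a • Real.log (e a / w a)) := by
    intro a ha
    rw [smul_eq_mul, Real.log_div (Real.exp_pos _).ne' (hpos a ha).ne', Real.log_exp]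
    field_simp
  -- Jensen for the concave `log` at the points `e a / w a`, whose `w`-average is `∑ e`.
  have hjensen : ∑ a ∈ t, w a • Real.log (e a / w a) ≤ Real.log (∑ a ∈ t, e a) := by
    refine (strictConcaveOn_log_Ioi.concaveOn.le_map_sum (fun a ha => (hpos a ha).le)
      (sum_filter_pos_eq_one hw0 hw1) fun a ha => div_pos (Real.exp_pos _) (hpos a ha)).trans_eq ?_
    exact congrArg Real.log <|
      sum_congr rfl fun a ha => by rw [smul_eq_mul, mul_div_cancel₀ _ (hpos a ha).ne']
  have hsubset : ∑ a ∈ t, e a ≤ ∑ a ∈ F, e a :=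
    sum_le_sum_of_subset_of_nonneg (fun a ha => hF a (hpos a ha)) fun a _ _ =>
      (Real.exp_pos _).le
  calc ∑ a ∈ t, w a * (x a - τ * Real.log (w a))
      = τ * ∑ a ∈ t, w a • Real.log (e a / w a) := by
        rw [mul_sum]; exact sum_congr rfl hterm
    _ ≤ τ * Real.log (∑ a ∈ F, e a) := by
      gcongr
      exact hjensen.trans (Real.log_le_log (sum_pos (fun a _ => Real.exp_pos _) ht) hsubset)

theorem nonpos_of_forall_le_imp_le_mul {ι : Type*} [Finite ι] {f : ι → ℝ} {γ : ℝ}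
    (hγ : γ < 1) (h : ∀ M, (∀ j, f j ≤ M) → ∀ i, f i ≤ γ * M) (i : ι) : f i ≤ 0 := by
  have : Nonempty ι := ⟨i⟩
  obtain ⟨j, hj⟩ := Finite.exists_max f
  -- At a maximiser `j`, taking `M = f j` gives `f j ≤ γ * f j`.
  have hfj : f j ≤ γ * f j := h (f j) hj j
  exact (hj i).trans (by nlinarith)

section Bellman

variable {S A : Type*} [Fintype S] [Fintype A] {r : S → A → ℝ} {γ τ : ℝ} {P : S → A → S → ℝ}
  {π : S → A → ℝ}

theorem Ton_sub_Ton (u v : S → A → ℝ) (s : S) (a : A) :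
    Ton r γ τ P π u s a - Ton r γ τ P π v s a
      = γ * ∑ s', P s a s' * ∑ a' ∈ univ.filter (fun a' => 0 < π s' a'),
          π s' a' * (u s' a' - v s' a') := by
  simp only [Ton, add_sub_add_left_eq_sub, ← mul_sub, ← sum_sub_distrib]
  congr 1
  refine sum_congr rfl fun s' _ => ?_
  congr 1
  exact sum_congr rfl fun a' _ => by ring

theorem Ton_sub_Ton_le (hγ0 : 0 ≤ γ) (hP0 : ∀ s a s', 0 ≤ P s a s')
    (hP1 : ∀ s a, ∑ s', P s a s' = 1) (hπ0 : ∀ s a, 0 ≤ π s a) (hπ1 : ∀ s, ∑ a, π s a = 1)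
    {u v : S → A → ℝ} {M : ℝ} (huv : ∀ s a, u s a - v s a ≤ M) (s : S) (a : A) :
    Ton r γ τ P π u s a - Ton r γ τ P π v s a ≤ γ * M := by
  rw [Ton_sub_Ton]
  refine mul_le_mul_of_nonneg_left ?_ hγ0
  refine sum_mul_le_of_forall_le (fun s' _ => hP0 s a s') (hP1 s a) fun s' _ => ?_
  exact sum_mul_le_of_forall_le (fun a' _ => hπ0 s' a') (sum_filter_pos_eq_one (hπ0 s') (hπ1 s'))
    fun a' _ => huv s' a'

theorem le_of_le_Ton_of_Ton_le (hγ0 : 0 ≤ γ) (hγ1 : γ < 1) (hP0 : ∀ s a s', 0 ≤ P s a s')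
    (hP1 : ∀ s a, ∑ s', P s a s' = 1) (hπ0 : ∀ s a, 0 ≤ π s a) (hπ1 : ∀ s, ∑ a, π s a = 1)
    {u v : S → A → ℝ} (hu : ∀ s a, u s a ≤ Ton r γ τ P π u s a)
    (hv : ∀ s a, Ton r γ τ P π v s a ≤ v s a) (s : S) (a : A) : u s a ≤ v s a := by
  suffices h : ∀ p : S × A, u p.1 p.2 - v p.1 p.2 ≤ 0 from sub_nonpos.mp (h (s, a))
  refine nonpos_of_forall_le_imp_le_mul hγ1 fun M hM p => ?_
  have hstep := Ton_sub_Ton_le hγ0 hP0 hP1 hπ0 hπ1 (r := r) (τ := τ) (fun s a => hM (s, a)) p.1 p.2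
  linarith [hu p.1 p.2, hv p.1 p.2]

theorem Ton_le_Tstar (hγ0 : 0 ≤ γ) (hP0 : ∀ s a s', 0 ≤ P s a s') (hτ : 0 < τ)
    (hπ0 : ∀ s a, 0 ≤ π s a) (hπ1 : ∀ s, ∑ a, π s a = 1) {β : S → A → ℝ}
    (hπβ : ∀ s a, 0 < π s a → 0 < β s a) (q : S → A → ℝ) (s : S) (a : A) :
    Ton r γ τ P π q s a ≤ Tstar r γ τ P β q s a := by
  refine add_le_add_right (mul_le_mul_of_nonneg_left (sum_le_sum fun s' _ => ?_) hγ0) _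
  refine mul_le_mul_of_nonneg_left ?_ (hP0 s a s')
  exact sum_mul_sub_log_le_log_sum_exp hτ (hπ0 s') (hπ1 s') (q s') fun a' h =>
    mem_filter.mpr ⟨mem_univ a', hπβ s' a' h⟩

end Bellman

theorem Tstar_subsolution_dominates_general {S A : Type*}
    [Fintype S] [Fintype A]
    (r : S → A → ℝ) (γ : ℝ) (hγ0 : 0 ≤ γ) (hγ1 : γ < 1)
    (P : S → A → S → ℝ) (hP0 : ∀ s a s', 0 ≤ P s a s') (hP1 : ∀ s a, (∑ s', P s a s') = 1)
    (τ : ℝ) (hτ : 0 < τ)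
    (β : S → A → ℝ)
    (q : S → A → ℝ) (hq : ∀ s a, Tstar r γ τ P β q s a ≤ q s a) :
    ∀ (π : S → A → ℝ), (∀ s a, 0 ≤ π s a) → (∀ s, (∑ a, π s a) = 1) →
      (∀ s a, 0 < π s a → 0 < β s a) →
      ∀ qpi : S → A → ℝ, qpi = Ton r γ τ P π qpi →
      ∀ s a, qpi s a ≤ q s a := by
  intro π hπ0 hπ1 hπβ qpi hfix
  exact le_of_le_Ton_of_Ton_le hγ0 hγ1 hP0 hP1 hπ0 hπ1
    (fun s a => (congrFun (congrFun hfix s) a).le)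
    (fun s a => (Ton_le_Tstar hγ0 hP0 hτ hπ0 hπ1 hπβ q s a).trans (hq s a))

/-- If `q ≥ T*_β q` pointwise, then `q` dominates the entropy-regularized value `q̃^π` of
every policy `π ⪯ β` (where `q̃^π = T^π q̃^π`). -/
theorem Tstar_subsolution_dominates {S A : Type*}
    [Fintype S] [Fintype A] [Nonempty S] [Nonempty A]
    (r : S → A → ℝ) (γ : ℝ) (hγ0 : 0 ≤ γ) (hγ1 : γ < 1)
    (P : S → A → S → ℝ) (hP0 : ∀ s a s', 0 ≤ P s a s') (hP1 : ∀ s a, (∑ s', P s a s') = 1)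
    (τ : ℝ) (hτ : 0 < τ)
    (β : S → A → ℝ) (hβ0 : ∀ s a, 0 ≤ β s a) (hβ1 : ∀ s, (∑ a, β s a) = 1)
    (q : S → A → ℝ) (hq : ∀ s a, Tstar r γ τ P β q s a ≤ q s a) :
    ∀ (π : S → A → ℝ), (∀ s a, 0 ≤ π s a) → (∀ s, (∑ a, π s a) = 1) →
      (∀ s a, 0 < π s a → 0 < β s a) →
      ∀ qpi : S → A → ℝ, qpi = Ton r γ τ P π qpi →
      ∀ s a, qpi s a ≤ q s a :=
  Tstar_subsolution_dominates_general r γ hγ0 hγ1 P hP0 hP1 τ hτ β q hq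
end

section
/- Let q̃*_β : S × A → ℝ satisfy q̃*_β = T*_β q̃*_β and define ṽ*_β(s) = τ log Σ_{a ∈ supp β(·|s)} exp(q̃*_β(s,a)/τ). For a policy π with π ⪯ β and q̃^π = T^π q̃^π, define ṽ^π(s) = Σ_{a ∈ supp π(·|s)} π(a|s) (q̃^π(s,a) − τ log π(a|s)). Then ṽ^π(s) ≤ ṽ*_β(s) for every state s and every π ⪯ β, and equality holds for the in-sample softmax greedy policy π̃*_β(a|s) = exp(q̃*_β(s,a)/τ) / Σ_{a' ∈ supp β(·|s)} exp(q̃*_β(s,a')/τ) on supp β(·|s) (and 0 otherwise); hence ṽ*_β(s) = max_{π ⪯ β} ṽ^π(s) for all s. -/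
open Finset

/-!
For a distribution `p` and values `q`, Gibbs' variational inequality bounds the regularized value
`∑ p (q - τ log p)` by the log-sum-exp `τ log ∑_T exp (q / τ)` over any `T ⊇ supp p`, with equality
for the softmax of `q` on `T`. If `π ⪯ β` and `c` bounds `ṽ^π - ṽ*` from above, the two Bellman
equations give `q̃^π ≤ q̃* + γ c`, hence `ṽ^π ≤ ṽ* + γ c`; for `c = max (ṽ^π - ṽ*)` this forces
`c ≤ 0`. The softmax greedy policy makes `q̃*` a fixed point of `T^π`, which is a `γ`-contraction,
so `q̃^π = q̃*` and `ṽ^π = ṽ*` for it.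
-/

namespace InSampleSoftmax

open Real (exp log exp_pos exp_ne_zero exp_add log_exp log_div log_mul)

variable {ι A S : Type*}

noncomputable def supp [Fintype A] (p : A → ℝ) : Finset A := univ.filter (fun a => 0 < p a)

noncomputable def logSumExp (τ : ℝ) (T : Finset A) (q : A → ℝ) : ℝ :=
  τ * log (∑ a ∈ T, exp (q a / τ))

noncomputable def entropyValue [Fintype A] (τ : ℝ) (p q : A → ℝ) : ℝ :=
  ∑ a ∈ supp p, p a * (q a - τ * log (p a))

noncomputable def softmax [DecidableEq A] (τ : ℝ) (T : Finset A) (q : A → ℝ) (a : A) : ℝ :=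
  if a ∈ T then exp (q a / τ) / ∑ a' ∈ T, exp (q a' / τ) else 0

/-- `Tstar r γ τ P β q` and `Ton r γ τ P π q` unfold to `backup r γ P v` with `v` the state value
`logSumExp τ (supp (β s)) (q s)`, resp. `entropyValue τ (π s) (q s)`. -/
def backup [Fintype S] (r : S → A → ℝ) (γ : ℝ) (P : S → A → S → ℝ) (v : S → ℝ)
    (s : S) (a : A) : ℝ :=
  r s a + γ * ∑ s', P s a s' * v s'

lemma sum_mul_le_sum_mul_add {s : Finset ι} {w f g : ι → ℝ} {c : ℝ}
    (hw0 : ∀ i ∈ s, 0 ≤ w i) (hw1 : ∑ i ∈ s, w i = 1) (h : ∀ i ∈ s, f i ≤ g i + c) :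
    ∑ i ∈ s, w i * f i ≤ ∑ i ∈ s, w i * g i + c :=
  calc ∑ i ∈ s, w i * f i ≤ ∑ i ∈ s, w i * (g i + c) :=
        sum_le_sum fun i hi => mul_le_mul_of_nonneg_left (h i hi) (hw0 i hi)
    _ = ∑ i ∈ s, w i * g i + c := by simp only [mul_add, sum_add_distrib, ← sum_mul, hw1, one_mul]

lemma nonpos_of_forall_le_imp_le_mul [Finite ι] {γ : ℝ} (hγ : γ < 1) {f : ι → ℝ}
    (h : ∀ c, (∀ i, f i ≤ c) → ∀ i, f i ≤ γ * c) (i : ι) : f i ≤ 0 := by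
  have : Nonempty ι := ⟨i⟩
  obtain ⟨j, hj⟩ := Finite.exists_max f
  have := h (f j) hj j
  nlinarith [hj i]

lemma backup_le_add [Fintype S] {r : S → A → ℝ} {γ : ℝ} {P : S → A → S → ℝ} (hγ0 : 0 ≤ γ)
    (hP0 : ∀ s a s', 0 ≤ P s a s') (hP1 : ∀ s a, ∑ s', P s a s' = 1)
    {v v' : S → ℝ} {c : ℝ} (h : ∀ s, v s ≤ v' s + c) (s : S) (a : A) :
    backup r γ P v s a ≤ backup r γ P v' s a + γ * c := by
  have := sum_mul_le_sum_mul_add (fun s' _ => hP0 s a s') (hP1 s a) (fun s' _ => h s')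
  unfold backup
  nlinarith [mul_le_mul_of_nonneg_left this hγ0]

section Support

variable [Fintype A] {p : A → ℝ}

@[simp]
lemma mem_supp {a : A} : a ∈ supp p ↔ 0 < p a := by simp [supp]

lemma supp_nonempty (hp : ∑ a, p a = 1) : (supp p).Nonempty := by
  obtain ⟨a, -, ha⟩ := exists_lt_of_sum_lt (f := 0) (g := p) (s := univ) (by simp [hp])
  exact ⟨a, mem_supp.mpr ha⟩

lemma sum_supp (hp : ∀ a, 0 ≤ p a) : ∑ a ∈ supp p, p a = ∑ a, p a :=
  sum_filter_of_ne fun a _ ha => (hp a).lt_of_ne' ha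

end Support

section Softmax

variable {τ : ℝ} {q q' : A → ℝ} {T : Finset A}

lemma logSumExp_le_add {c : ℝ} (hτ : 0 < τ) (hT : T.Nonempty) (h : ∀ a ∈ T, q a ≤ q' a + c) :
    logSumExp τ T q ≤ logSumExp τ T q' + c := by
  have hZ : 0 < ∑ a ∈ T, exp (q' a / τ) := sum_pos (fun a _ => exp_pos _) hT
  have hsum : ∑ a ∈ T, exp (q a / τ) ≤ exp (c / τ) * ∑ a ∈ T, exp (q' a / τ) := by
    rw [mul_sum]
    refine sum_le_sum fun a ha => ?_
    rw [← exp_add, ← add_div]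
    gcongr
    linarith [h a ha]
  calc logSumExp τ T q ≤ τ * log (exp (c / τ) * ∑ a ∈ T, exp (q' a / τ)) := by
        unfold logSumExp
        gcongr
    _ = logSumExp τ T q' + c := by
        rw [log_mul (exp_ne_zero _) hZ.ne', log_exp, logSumExp]
        field_simp
        ring

variable [DecidableEq A]

lemma softmax_nonneg (a : A) : 0 ≤ softmax τ T q a := by
  unfold softmax; split_ifs <;> positivity

lemma softmax_of_mem {a : A} (ha : a ∈ T) :
    softmax τ T q a = exp (q a / τ) / ∑ a' ∈ T, exp (q a' / τ) :=
  if_pos ha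

lemma sum_softmax (hT : T.Nonempty) : ∑ a ∈ T, softmax τ T q a = 1 := by
  rw [sum_congr rfl fun a ha => softmax_of_mem ha, ← sum_div,
    div_self (sum_pos (fun a _ => exp_pos _) hT).ne']

lemma supp_softmax [Fintype A] (hT : T.Nonempty) : supp (softmax τ T q) = T := by
  ext a
  rw [mem_supp]
  by_cases ha : a ∈ T
  · simpa [softmax_of_mem ha, ha] using div_pos (exp_pos _) (sum_pos (fun a _ => exp_pos _) hT)
  · simp [softmax, ha]

lemma sum_univ_softmax [Fintype A] (hT : T.Nonempty) : ∑ a, softmax τ T q a = 1 := by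
  rw [← sum_supp softmax_nonneg, supp_softmax hT, sum_softmax hT]

lemma entropyValue_softmax [Fintype A] (hτ : 0 < τ) (hT : T.Nonempty) :
    entropyValue τ (softmax τ T q) q = logSumExp τ T q := by
  have hZ : 0 < ∑ a ∈ T, exp (q a / τ) := sum_pos (fun a _ => exp_pos _) hT
  have hterm : ∀ a ∈ T, softmax τ T q a * (q a - τ * log (softmax τ T q a)) =
      softmax τ T q a * logSumExp τ T q := by
    intro a ha
    rw [softmax_of_mem ha, log_div (exp_ne_zero _) hZ.ne', log_exp, logSumExp]
    field_simp
    ring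
  rw [entropyValue, supp_softmax hT, sum_congr rfl hterm, ← sum_mul, sum_softmax hT, one_mul]

end Softmax

section Distribution

variable [Fintype A] {τ : ℝ} {p q q' : A → ℝ} {T : Finset A}

lemma entropyValue_le_add {c : ℝ} (hp0 : ∀ a, 0 ≤ p a) (hp1 : ∑ a, p a = 1)
    (h : ∀ a, q a ≤ q' a + c) : entropyValue τ p q ≤ entropyValue τ p q' + c :=
  sum_mul_le_sum_mul_add (fun a _ => hp0 a) (by rw [sum_supp hp0, hp1])
    fun a _ => by linarith [h a]

/-- Gibbs' variational inequality, from Jensen for `log` with weights `p` at the points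
`exp (q a / τ) / p a`. -/
lemma entropyValue_le_logSumExp (hτ : 0 < τ) (hp0 : ∀ a, 0 ≤ p a) (hp1 : ∑ a, p a = 1)
    (hpT : supp p ⊆ T) : entropyValue τ p q ≤ logSumExp τ T q := by
  have hpos : ∀ a ∈ supp p, 0 < p a := fun a => mem_supp.mp
  have jensen := strictConcaveOn_log_Ioi.concaveOn.le_map_sum (t := supp p) (w := p)
    (p := fun a => exp (q a / τ) / p a) (fun a ha => (hpos a ha).le)
    (by rw [sum_supp hp0, hp1]) (fun a ha => Set.mem_Ioi.mpr (by have := hpos a ha; positivity))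
  simp only [smul_eq_mul] at jensen
  calc entropyValue τ p q = τ * ∑ a ∈ supp p, p a * log (exp (q a / τ) / p a) := by
        rw [entropyValue, mul_sum]
        refine sum_congr rfl fun a ha => ?_
        rw [log_div (exp_ne_zero _) (hpos a ha).ne', log_exp]
        field_simp
    _ ≤ τ * log (∑ a ∈ supp p, p a * (exp (q a / τ) / p a)) := by gcongr
    _ = τ * log (∑ a ∈ supp p, exp (q a / τ)) := by
        congr 2
        exact sum_congr rfl fun a ha => mul_div_cancel₀ _ (hpos a ha).ne'
    _ ≤ logSumExp τ T q := by
        unfold logSumExp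
        gcongr
        exact sum_pos (fun a _ => exp_pos _) (supp_nonempty hp1)

end Distribution

section Bellman

variable [Fintype S] [Fintype A] {r : S → A → ℝ} {γ τ : ℝ} {P : S → A → S → ℝ}

/-- `Ton π` is a `γ`-contraction in the sup norm, so it has at most one fixed point. -/
lemma Ton_fixedPoint_unique (hγ0 : 0 ≤ γ) (hγ1 : γ < 1) (hP0 : ∀ s a s', 0 ≤ P s a s')
    (hP1 : ∀ s a, ∑ s', P s a s' = 1) {π : S → A → ℝ} (hπ0 : ∀ s a, 0 ≤ π s a)
    (hπ1 : ∀ s, ∑ a, π s a = 1) {q₁ q₂ : S → A → ℝ} (h₁ : q₁ = Ton r γ τ P π q₁)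
    (h₂ : q₂ = Ton r γ τ P π q₂) : q₁ = q₂ := by
  have sub_nonpos_of_fixed : ∀ {q q' : S → A → ℝ}, q = Ton r γ τ P π q → q' = Ton r γ τ P π q' →
      ∀ s a, q s a - q' s a ≤ 0 := by
    intro q q' hq hq' s a
    refine nonpos_of_forall_le_imp_le_mul (f := fun x : S × A => q x.1 x.2 - q' x.1 x.2) hγ1
      (fun c hc x => ?_) (s, a)
    have hle : Ton r γ τ P π q x.1 x.2 ≤ Ton r γ τ P π q' x.1 x.2 + γ * c :=
      backup_le_add hγ0 hP0 hP1
        (fun s => entropyValue_le_add (hπ0 s) (hπ1 s) fun a => by linarith [hc (s, a)]) x.1 x.2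
    rw [← hq, ← hq'] at hle
    linarith
  funext s a
  linarith [sub_nonpos_of_fixed h₁ h₂ s a, sub_nonpos_of_fixed h₂ h₁ s a]

lemma entropyValue_le_logSumExp_of_fixedPoint (hγ0 : 0 ≤ γ) (hγ1 : γ < 1) (hτ : 0 < τ)
    (hP0 : ∀ s a s', 0 ≤ P s a s') (hP1 : ∀ s a, ∑ s', P s a s' = 1) {β qstar : S → A → ℝ}
    (hfix : qstar = Tstar r γ τ P β qstar) {π : S → A → ℝ} (hπ0 : ∀ s a, 0 ≤ π s a)
    (hπ1 : ∀ s, ∑ a, π s a = 1) (hπβ : ∀ s a, 0 < π s a → 0 < β s a) {q : S → A → ℝ}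
    (hq : q = Ton r γ τ P π q) (s : S) :
    entropyValue τ (π s) (q s) ≤ logSumExp τ (supp (β s)) (qstar s) := by
  have hsupp : ∀ s, supp (π s) ⊆ supp (β s) := fun s a ha =>
    mem_supp.mpr (hπβ s a (mem_supp.mp ha))
  suffices entropyValue τ (π s) (q s) - logSumExp τ (supp (β s)) (qstar s) ≤ 0 by linarith
  refine nonpos_of_forall_le_imp_le_mul
    (f := fun s => entropyValue τ (π s) (q s) - logSumExp τ (supp (β s)) (qstar s)) hγ1
    (fun c hc s => ?_) s
  have hq_le : ∀ s a, q s a ≤ qstar s a + γ * c := by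
    intro s a
    have hle : Ton r γ τ P π q s a ≤ Tstar r γ τ P β qstar s a + γ * c :=
      backup_le_add hγ0 hP0 hP1 (fun s => sub_le_iff_le_add'.mp (hc s)) s a
    rwa [← hq, ← hfix] at hle
  have := (entropyValue_le_logSumExp hτ (hπ0 s) (hπ1 s) (hsupp s)).trans
    (logSumExp_le_add hτ ((supp_nonempty (hπ1 s)).mono (hsupp s)) fun a _ => hq_le s a)
  linarith

lemma fixedPoint_Ton_softmax [DecidableEq A] (hτ : 0 < τ) {β qstar : S → A → ℝ}
    (hβ1 : ∀ s, ∑ a, β s a = 1) (hfix : qstar = Tstar r γ τ P β qstar) :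
    qstar = Ton r γ τ P (fun s => softmax τ (supp (β s)) (qstar s)) qstar := by
  have hT : Ton r γ τ P (fun s => softmax τ (supp (β s)) (qstar s)) qstar =
      Tstar r γ τ P β qstar := by
    change backup r γ P _ = backup r γ P _
    congr 1
    funext s
    exact entropyValue_softmax hτ (supp_nonempty (hβ1 s))
  exact hfix.trans hT.symm

end Bellman

end InSampleSoftmax

open InSampleSoftmax

theorem insample_softmax_value_is_optimal_general {S A : Type*}
    [Fintype S] [Fintype A]
    (r : S → A → ℝ) (γ : ℝ) (hγ0 : 0 ≤ γ) (hγ1 : γ < 1)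
    (P : S → A → S → ℝ) (hP0 : ∀ s a s', 0 ≤ P s a s') (hP1 : ∀ s a, (∑ s', P s a s') = 1)
    (τ : ℝ) (hτ : 0 < τ)
    (β : S → A → ℝ) (hβ1 : ∀ s, (∑ a, β s a) = 1)
    (qstar : S → A → ℝ) (hfix : qstar = Tstar r γ τ P β qstar) :
    let vstar : S → ℝ := fun s =>
      τ * Real.log (∑ a ∈ Finset.univ.filter (fun a => 0 < β s a), Real.exp (qstar s a / τ))
    let pistar : S → A → ℝ := fun s a =>
      if 0 < β s a then
        Real.exp (qstar s a / τ) /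
          ∑ a' ∈ Finset.univ.filter (fun a' => 0 < β s a'), Real.exp (qstar s a' / τ)
      else 0
    let vOf : (S → A → ℝ) → (S → A → ℝ) → S → ℝ := fun π qpi s =>
      ∑ a ∈ Finset.univ.filter (fun a => 0 < π s a), π s a * (qpi s a - τ * Real.log (π s a))
    (∀ (π : S → A → ℝ), (∀ s a, 0 ≤ π s a) → (∀ s, (∑ a, π s a) = 1) →
      (∀ s a, 0 < π s a → 0 < β s a) →
      ∀ qpi : S → A → ℝ, qpi = Ton r γ τ P π qpi →
      ∀ s, vOf π qpi s ≤ vstar s) ∧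
    (∀ qg : S → A → ℝ, qg = Ton r γ τ P pistar qg → ∀ s, vOf pistar qg s = vstar s) ∧
    (∀ s : S, IsGreatest
      {x : ℝ | ∃ (π : S → A → ℝ) (qpi : S → A → ℝ),
        (∀ s' a, 0 ≤ π s' a) ∧ (∀ s', (∑ a, π s' a) = 1) ∧
        (∀ s' a, 0 < π s' a → 0 < β s' a) ∧
        qpi = Ton r γ τ P π qpi ∧ x = vOf π qpi s}
      (vstar s)) := by
  classical
  intro vstar pistar vOf
  have hβ : ∀ s, (supp (β s)).Nonempty := fun s => supp_nonempty (hβ1 s)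
  have hpistar : pistar = fun s => softmax τ (supp (β s)) (qstar s) := by
    funext s a
    simp only [pistar, softmax, supp, mem_filter, mem_univ, true_and]
  have hle : ∀ π, (∀ s a, 0 ≤ π s a) → (∀ s, ∑ a, π s a = 1) → (∀ s a, 0 < π s a → 0 < β s a) →
      ∀ qpi, qpi = Ton r γ τ P π qpi → ∀ s, vOf π qpi s ≤ vstar s :=
    fun _ hπ0 hπ1 hπβ _ hq =>
      entropyValue_le_logSumExp_of_fixedPoint hγ0 hγ1 hτ hP0 hP1 hfix hπ0 hπ1 hπβ hq
  have hπ0 : ∀ s a, 0 ≤ pistar s a := hpistar ▸ fun s a => softmax_nonneg a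
  have hπ1 : ∀ s, ∑ a, pistar s a = 1 := hpistar ▸ fun s => sum_univ_softmax (hβ s)
  have hπβ : ∀ s a, 0 < pistar s a → 0 < β s a := fun s a ha => by
    have ha : a ∈ supp (pistar s) := mem_supp.mpr ha
    rwa [hpistar, supp_softmax (hβ s), mem_supp] at ha
  have hvpi : ∀ s, vOf pistar qstar s = vstar s :=
    hpistar ▸ fun s => entropyValue_softmax hτ (hβ s)
  have hqfix : qstar = Ton r γ τ P pistar qstar :=
    hpistar ▸ fixedPoint_Ton_softmax hτ hβ1 hfix
  refine ⟨hle, fun qg hqg s => ?_,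
    fun s => ⟨⟨pistar, qstar, hπ0, hπ1, hπβ, hqfix, (hvpi s).symm⟩, ?_⟩⟩
  · rw [Ton_fixedPoint_unique hγ0 hγ1 hP0 hP1 hπ0 hπ1 hqg hqfix]
    exact hvpi s
  · rintro x ⟨π, qpi, hπ0, hπ1, hπβ, hq, rfl⟩
    exact hle π hπ0 hπ1 hπβ qpi hq s

/-- The in-sample softmax optimal state value `ṽ*_β` dominates the entropy-regularized state
value `ṽ^π` of every policy `π ⪯ β`, with equality attained by the in-sample softmax greedy
policy `π̃*_β`; hence `ṽ*_β(s) = max_{π ⪯ β} ṽ^π(s)` for all `s`. -/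
theorem insample_softmax_value_is_optimal {S A : Type*}
    [Fintype S] [Fintype A] [Nonempty S] [Nonempty A]
    (r : S → A → ℝ) (γ : ℝ) (hγ0 : 0 ≤ γ) (hγ1 : γ < 1)
    (P : S → A → S → ℝ) (hP0 : ∀ s a s', 0 ≤ P s a s') (hP1 : ∀ s a, (∑ s', P s a s') = 1)
    (τ : ℝ) (hτ : 0 < τ)
    (β : S → A → ℝ) (hβ0 : ∀ s a, 0 ≤ β s a) (hβ1 : ∀ s, (∑ a, β s a) = 1)
    (qstar : S → A → ℝ) (hfix : qstar = Tstar r γ τ P β qstar) :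
    let vstar : S → ℝ := fun s =>
      τ * Real.log (∑ a ∈ Finset.univ.filter (fun a => 0 < β s a), Real.exp (qstar s a / τ))
    let pistar : S → A → ℝ := fun s a =>
      if 0 < β s a then
        Real.exp (qstar s a / τ) /
          ∑ a' ∈ Finset.univ.filter (fun a' => 0 < β s a'), Real.exp (qstar s a' / τ)
      else 0
    let vOf : (S → A → ℝ) → (S → A → ℝ) → S → ℝ := fun π qpi s =>
      ∑ a ∈ Finset.univ.filter (fun a => 0 < π s a), π s a * (qpi s a - τ * Real.log (π s a))
    (∀ (π : S → A → ℝ), (∀ s a, 0 ≤ π s a) → (∀ s, (∑ a, π s a) = 1) →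
      (∀ s a, 0 < π s a → 0 < β s a) →
      ∀ qpi : S → A → ℝ, qpi = Ton r γ τ P π qpi →
      ∀ s, vOf π qpi s ≤ vstar s) ∧
    (∀ qg : S → A → ℝ, qg = Ton r γ τ P pistar qg → ∀ s, vOf pistar qg s = vstar s) ∧
    (∀ s : S, IsGreatest
      {x : ℝ | ∃ (π : S → A → ℝ) (qpi : S → A → ℝ),
        (∀ s' a, 0 ≤ π s' a) ∧ (∀ s', (∑ a, π s' a) = 1) ∧
        (∀ s' a, 0 < π s' a → 0 < β s' a) ∧
        qpi = Ton r γ τ P π qpi ∧ x = vOf π qpi s}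
      (vstar s)) :=
  insample_softmax_value_is_optimal_general r γ hγ0 hγ1 P hP0 hP1 τ hτ β hβ1 qstar hfix
end
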